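/- arXiv:2307.06777 — 2 statements merged into one kernel-verified Lean document; each statement's English description precedes it below -/
import Mathlib

section
/- Suppose z' satisfies z'·(a₁·a₀) = (b₁·b₀)·z' and z'·u = v·z' for all (u,v) in a set G of word pairs. Then there exists a single word z that is a common witness (inner for all, or outer for all) of the set of pairs { (a₀·u·a₁, b₀·v·b₁) : (u,v) ∈ G* }, where G* is the submonoid generated by G. -/
lemma fm_split {α : Type*} (x y u v : FreeMonoid α) (h : x * y = u * v) :
    (∃ t, u = x * t ∧ y = t * v) ∨ (∃ t, x = u * t ∧ v = t * y) := by
  have h' : x.toList ++ y.toList = u.toList ++ v.toList := by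
    simpa [FreeMonoid.toList_mul] using congrArg FreeMonoid.toList h
  rcases List.append_eq_append_iff.mp h' with ⟨t, ht1, ht2⟩ | ⟨t, ht1, ht2⟩
  · left
    exact ⟨FreeMonoid.ofList t,
      FreeMonoid.toList.injective (by simpa [FreeMonoid.toList_mul] using ht1),
      FreeMonoid.toList.injective (by simpa [FreeMonoid.toList_mul] using ht2)⟩
  · right
    exact ⟨FreeMonoid.ofList t,
      FreeMonoid.toList.injective (by simpa [FreeMonoid.toList_mul] using ht1),
      FreeMonoid.toList.injective (by simpa [FreeMonoid.toList_mul] using ht2)⟩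

theorem common_witness_of_outer {α : Type*}
    (G : Set (FreeMonoid α × FreeMonoid α)) (a₀ a₁ b₀ b₁ z' : FreeMonoid α)
    (h₁ : z' * (a₁ * a₀) = (b₁ * b₀) * z')
    (h₂ : ∀ p ∈ G, z' * p.1 = p.2 * z') :
    ∃ z : FreeMonoid α,
      (∀ p ∈ Submonoid.closure G, (a₀ * p.1 * a₁) * z = z * (b₀ * p.2 * b₁)) ∨
      (∀ p ∈ Submonoid.closure G, z * (a₀ * p.1 * a₁) = (b₀ * p.2 * b₁) * z) := by
  have hcl : ∀ p ∈ Submonoid.closure G, z' * p.1 = p.2 * z' := by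
    intro p hp
    induction hp using Submonoid.closure_induction with
    | mem x hx => exact h₂ x hx
    | one => simp
    | mul x y hx hy ihx ihy =>
      have : z' * (x * y).1 = z' * x.1 * y.1 := by rw [Prod.fst_mul, mul_assoc]
      rw [this, ihx, mul_assoc, ihy, Prod.snd_mul, mul_assoc]
  have h₁' : (z' * a₁) * a₀ = b₁ * (b₀ * z') := by
    rw [mul_assoc]; rw [h₁]; rw [mul_assoc]
  rcases fm_split _ _ _ _ h₁' with ⟨t, ht1, ht2⟩ | ⟨t, ht1, ht2⟩
  · -- ht1 : b₁ = z' * a₁ * t, ht2 : a₀ = t * (b₀ * z') : inner witness t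
    refine ⟨t, Or.inl ?_⟩
    intro p hp
    have hz := hcl p hp
    have hzw : ∀ w, z' * (p.1 * w) = p.2 * (z' * w) := fun w => by
      rw [← mul_assoc, hz, mul_assoc]
    simp only [mul_assoc]
    rw [ht2]
    simp only [mul_assoc]
    rw [hzw, ← mul_assoc z' a₁ t, ← ht1]
  · -- ht1 : z' * a₁ = b₁ * t, ht2 : b₀ * z' = t * a₀ : outer witness t
    refine ⟨t, Or.inr ?_⟩
    intro p hp
    have hz := hcl p hp
    have hzw : ∀ w, z' * (p.1 * w) = p.2 * (z' * w) := fun w => by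
      rw [← mul_assoc, hz, mul_assoc]
    have ht1w : ∀ w, z' * (a₁ * w) = b₁ * (t * w) := fun w => by
      rw [← mul_assoc, ht1, mul_assoc]
    have h₁w : ∀ w, z' * (a₁ * (a₀ * w)) = b₁ * (b₀ * (z' * w)) := fun w => by
      calc z' * (a₁ * (a₀ * w)) = (z' * (a₁ * a₀)) * w := by simp only [mul_assoc]
        _ = ((b₁ * b₀) * z') * w := by rw [h₁]
        _ = b₁ * (b₀ * (z' * w)) := by simp only [mul_assoc]
    have key : b₁ * (t * (a₀ * (p.1 * a₁))) = b₁ * (b₀ * (p.2 * (b₁ * t))) := by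
      rw [← ht1w, h₁w, hzw, ht1]
    simpa only [mul_assoc] using mul_left_cancel key
end

section
/- If a word z is an inner witness of each pair (ρ^n, ρ'^n) for a primitive pair (ρ,ρ') (i.e., ρ^n·z = z·ρ'^n for all n), then z is an inner witness of (ρ,ρ') itself: ρ·z = z·ρ'. -/
private lemma fm_length_pow {α : Type*} (a : FreeMonoid α) (k : ℕ) :
    (a ^ k).length = k * a.length := by
  induction k with
  | zero => rw [pow_zero, Nat.zero_mul]; rfl
  | succ k ih => rw [pow_succ, FreeMonoid.length_mul, ih, Nat.succ_mul]

private lemma fm_eq_of_mul_eq {α : Type*} {a b s t : FreeMonoid α}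
    (h : a * s = b * t) (hl : a.length = b.length) : a = b := by
  have h' := congrArg FreeMonoid.toList h
  rw [FreeMonoid.toList_mul, FreeMonoid.toList_mul] at h'
  exact FreeMonoid.toList.injective (List.append_inj_left h' hl)

private lemma fm_pref_of_mul_eq {α : Type*} {a b s t : FreeMonoid α}
    (h : a * s = b * t) (hl : a.length ≤ b.length) : ∃ u, a * u = b := by
  have h' := congrArg FreeMonoid.toList h
  rw [FreeMonoid.toList_mul, FreeMonoid.toList_mul] at h'
  have hpa : a.toList <+: b.toList ++ t.toList := h' ▸ ⟨s.toList, rfl⟩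
  have hpb : b.toList <+: b.toList ++ t.toList := ⟨t.toList, rfl⟩
  obtain ⟨c, hc⟩ := List.prefix_of_prefix_length_le hpa hpb hl
  exact ⟨FreeMonoid.ofList c, FreeMonoid.toList.injective (by
    rw [FreeMonoid.toList_mul, FreeMonoid.toList_ofList, hc])⟩

theorem inner_witness_of_pow {α : Type*} (ρ ρ' z : FreeMonoid α) (n : ℕ)
    (hρ : ρ ≠ 1) (hn : 1 ≤ n) (hlen : ρ.length = ρ'.length)
    (h : ρ ^ n * z = z * ρ' ^ n) :
    ρ * z = z * ρ' := by
  have hρl : 1 ≤ ρ.length := by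
    rcases Nat.eq_zero_or_pos ρ.length with h0 | h0
    · exact absurd (FreeMonoid.length_eq_zero.mp h0) hρ
    · exact h0
  have key : ∀ k, ρ ^ (n * k) * z = z * ρ' ^ (n * k) := by
    intro k
    induction k with
    | zero => simp
    | succ k ih =>
      rw [Nat.mul_succ, pow_add, pow_add, mul_assoc, h, ← mul_assoc, ih, mul_assoc]
  set m := n * (z.length + 1) with hm
  have H : ρ ^ m * z = z * ρ' ^ m := key (z.length + 1)
  have hm1 : 1 ≤ m := Nat.one_le_iff_ne_zero.mpr (by positivity)
  have hzlen : z.length ≤ (ρ ^ m).length := by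
    rw [fm_length_pow]
    calc z.length ≤ z.length + 1 := Nat.le_succ _
      _ ≤ m := Nat.le_mul_of_pos_left _ hn
      _ ≤ m * ρ.length := Nat.le_mul_of_pos_right _ hρl
  obtain ⟨u, hu⟩ := fm_pref_of_mul_eq H.symm hzlen
  clear hm; clear_value m
  obtain ⟨m', rfl⟩ : ∃ m', m = m' + 1 := ⟨m - 1, (Nat.succ_pred_eq_of_pos hm1).symm⟩
  apply fm_eq_of_mul_eq (s := u * ρ ^ m') (t := ρ' ^ m' * u)
  · have A : ρ * z * (u * ρ ^ m') = ρ ^ (2 * m' + 2) := by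
      rw [← mul_assoc, mul_assoc ρ z u, hu,
        show 2 * m' + 2 = 1 + (m' + 1) + m' by ring]
      simp [pow_add, pow_succ, mul_assoc]
    have B : z * ρ' * (ρ' ^ m' * u) = ρ ^ (2 * m' + 2) := by
      rw [← mul_assoc, mul_assoc z ρ' (ρ' ^ m'), ← pow_succ', ← H, mul_assoc, hu,
        show 2 * m' + 2 = (m' + 1) + (m' + 1) by ring]
      simp [pow_add, pow_succ, mul_assoc]
    rw [A, B]
  · rw [FreeMonoid.length_mul, FreeMonoid.length_mul, hlen, Nat.add_comm]
end
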